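/- Let Q denote the Gaussian tail function Q(x) = ∫_x^∞ (1/√(2π)) e^{-t²/2} dt. Fix K ∈ ℕ, M > 0, σ > 0, and for each k = 0, …, K−1 let c_k ≥ 0, g_k ≥ 0 and P_m^{(k)}(γ) = 1 - Q((γ - M(σ² + g_k))/(σ √(2M(σ² + 2g_k)))). Then the aggregate interference function G(γ₀, …, γ_{K−1}) = Σ_{k=0}^{K−1} c_k P_m^{(k)}(γ_k) is a convex function on the convex set {γ ∈ ℝ^K : γ_k ≤ M(σ² + g_k) for all k}. -/

import Mathlib

/-- The Gaussian tail function `Q(x) = ∫_x^∞ (1/√(2π)) e^{-t²/2} dt`. -/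
noncomputable def gaussQ (x : ℝ) : ℝ :=
  ∫ t in Set.Ioi x, (Real.sqrt (2 * Real.pi))⁻¹ * Real.exp (-t ^ 2 / 2)

/-!
`Φ = 1 - Q` has the standard Gaussian density as its derivative, and the density increases on
`(-∞, 0]`, so `Φ` is convex there. The `k`-th summand is `c_k Φ` composed with an affine map of
nonnegative slope sending `γ_k ≤ M(σ² + g_k)` into `(-∞, 0]`, and a sum of convex functions of
separate coordinates is convex on the product of the half-lines.
-/

open MeasureTheory Set ProbabilityTheory

theorem hasDerivAt_integral_Ioi {f : ℝ → ℝ} (hf : Integrable f) {x : ℝ}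
    (hfx : ContinuousAt f x) : HasDerivAt (fun y => ∫ t in Ioi y, f t) (-f x) x := by
  have htail : (fun y => ∫ t in Ioi y, f t) = fun y => (∫ t in Ioi 0, f t) - ∫ t in 0..y, f t := by
    funext y
    rw [← intervalIntegral.integral_Ioi_sub_Ioi' hf.integrableOn hf.integrableOn, sub_sub_cancel]
  rw [htail]
  exact (intervalIntegral.integral_hasDerivAt_right hf.intervalIntegrable
    hf.aestronglyMeasurable.stronglyMeasurableAtFilter hfx).const_sub _

theorem ConvexOn.finset_sum {ι E : Type*} [AddCommMonoid E] [Module ℝ E] {s : Set E}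
    (hs : Convex ℝ s) (t : Finset ι) {f : ι → E → ℝ} (hf : ∀ i ∈ t, ConvexOn ℝ s (f i)) :
    ConvexOn ℝ s fun x => ∑ i ∈ t, f i x := by
  classical
  induction t using Finset.induction_on with
  | empty => simpa using convexOn_const 0 hs
  | insert i t hi ih =>
    simp only [Finset.sum_insert hi]
    rw [Finset.forall_mem_insert] at hf
    exact hf.1.add (ih hf.2)

theorem convexOn_Iic_sum_apply {ι : Type*} [Fintype ι] {a : ι → ℝ} {φ : ι → ℝ → ℝ}
    (hφ : ∀ i, ConvexOn ℝ (Iic (a i)) (φ i)) :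
    ConvexOn ℝ (Iic a) fun γ => ∑ i, φ i (γ i) :=
  ConvexOn.finset_sum (convex_Iic a) _ fun i _ =>
    ((hφ i).comp_linearMap (LinearMap.proj (R := ℝ) (φ := fun _ : ι => ℝ) i)).subset
      (fun γ (hγ : γ ≤ a) => hγ i) (convex_Iic a)

theorem ConvexOn.comp_sub_div {f : ℝ → ℝ} (hf : ConvexOn ℝ (Iic 0) f) (a : ℝ) {b : ℝ}
    (hb : 0 ≤ b) : ConvexOn ℝ (Iic a) fun x => f ((x - a) / b) := by
  let g : ℝ →ᵃ[ℝ] ℝ := (b⁻¹ • LinearMap.id : ℝ →ₗ[ℝ] ℝ).toAffineMap - AffineMap.const ℝ ℝ (a / b)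
  have hg : ∀ x, g x = (x - a) / b := fun x => by simp [g]; ring
  refine ((hf.comp_affineMap g).subset (fun x hx => ?_) (convex_Iic a)).congr fun x _ => ?_
  · simp only [mem_preimage, hg, mem_Iic]
    exact div_nonpos_of_nonpos_of_nonneg (sub_nonpos.2 hx) hb
  · simp [hg]

theorem gaussianPDFReal_zero_one (t : ℝ) :
    gaussianPDFReal 0 1 t = (Real.sqrt (2 * Real.pi))⁻¹ * Real.exp (-t ^ 2 / 2) := by
  simp [gaussianPDFReal]

theorem gaussQ_eq_integral_gaussianPDFReal (x : ℝ) :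
    gaussQ x = ∫ t in Ioi x, gaussianPDFReal 0 1 t := by
  simp only [gaussQ, gaussianPDFReal_zero_one]

theorem hasDerivAt_gaussQ (x : ℝ) : HasDerivAt gaussQ (-gaussianPDFReal 0 1 x) x := by
  rw [show gaussQ = _ from funext gaussQ_eq_integral_gaussianPDFReal]
  exact hasDerivAt_integral_Ioi (integrable_gaussianPDFReal 0 1)
    (by rw [gaussianPDFReal_def]; fun_prop)

theorem monotoneOn_gaussianPDFReal_zero_one : MonotoneOn (gaussianPDFReal 0 1) (Iic 0) := by
  intro x hx y hy hxy
  simp only [gaussianPDFReal_zero_one]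
  have hsq : y ^ 2 ≤ x ^ 2 := by nlinarith [mem_Iic.1 hy]
  gcongr

theorem convexOn_one_sub_gaussQ : ConvexOn ℝ (Iic 0) fun x => 1 - gaussQ x := by
  have hderiv : ∀ x, HasDerivAt (fun x => 1 - gaussQ x) (gaussianPDFReal 0 1 x) x := fun x => by
    simpa using (hasDerivAt_gaussQ x).const_sub 1
  refine MonotoneOn.convexOn_of_deriv (convex_Iic 0)
    (fun x _ => (hderiv x).continuousAt.continuousWithinAt)
    (fun x _ => (hderiv x).differentiableAt.differentiableWithinAt) ?_
  rw [interior_Iic, funext fun x => (hderiv x).deriv]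
  exact monotoneOn_gaussianPDFReal_zero_one.mono Iio_subset_Iic_self

theorem aggregate_Pm_convexOn_general (K : ℕ) (M σ : ℝ) (hσ : 0 < σ)
    (c g : Fin K → ℝ) (hc : ∀ k, 0 ≤ c k) :
    ConvexOn ℝ {γ : Fin K → ℝ | ∀ k, γ k ≤ M * (σ ^ 2 + g k)}
      (fun γ : Fin K → ℝ =>
        ∑ k : Fin K,
          c k * (1 - gaussQ ((γ k - M * (σ ^ 2 + g k)) /
            (σ * Real.sqrt (2 * M * (σ ^ 2 + 2 * g k)))))) :=
  -- the constraint set is `Iic` for the pointwise order on `Fin K → ℝ`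
  convexOn_Iic_sum_apply (a := fun k => M * (σ ^ 2 + g k)) fun k =>
    (convexOn_one_sub_gaussQ.comp_sub_div _ (by positivity)).smul (hc k)

/-- the aggregate interference
`G(γ) = Σ_k c_k (1 - Q((γ_k - M(σ²+g_k))/(σ√(2M(σ²+2g_k)))))` is convex on
`{γ ∈ ℝ^K : γ_k ≤ M(σ²+g_k) for all k}`. -/
theorem aggregate_Pm_convexOn (K : ℕ) (M σ : ℝ) (hM : 0 < M) (hσ : 0 < σ)
    (c g : Fin K → ℝ) (hc : ∀ k, 0 ≤ c k) (hg : ∀ k, 0 ≤ g k) :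
    ConvexOn ℝ {γ : Fin K → ℝ | ∀ k, γ k ≤ M * (σ ^ 2 + g k)}
      (fun γ : Fin K → ℝ =>
        ∑ k : Fin K,
          c k * (1 - gaussQ ((γ k - M * (σ ^ 2 + g k)) /
            (σ * Real.sqrt (2 * M * (σ ^ 2 + 2 * g k)))))) :=
  aggregate_Pm_convexOn_general K M σ hσ c g hc
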